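/- arXiv:1009.3394 — 7 statements merged into one kernel-verified Lean document; each statement's English description precedes it below -/
import Mathlib

section
/- Let G be a connected finite simple graph on at least two vertices. Then G is a threshold graph if and only if one of the following holds: (i) there exist k ≥ 1 and positive integers m₁,…,m_{2k} with m₁ ≥ 2 such that G is isomorphic to Γ(m₁,…,m_{2k}) = ((((O_{m₁} ∨ K_{m₂}) ∪ O_{m₃}) ∨ K_{m₄}) ⋯ ) ∨ K_{m_{2k}}; or (ii) there exist k ≥ 0 and positive integers m₁,…,m_{2k+1} with m₁ ≥ 2 such that G is isomorphic to Γ(m₁,…,m_{2k+1}) = ((((K_{m₁} ∪ O_{m₂}) ∨ K_{m₃}) ∪ O_{m₄}) ⋯ ) ∨ K_{m_{2k+1}}. -/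
open Finset

/-- `sig m l = m 1 + ⋯ + m l` (block sizes `m` are indexed starting from 1). -/
def sig (m : ℕ → ℕ) (l : ℕ) : ℕ := ∑ i ∈ Finset.Icc 1 l, m i

/-- The (1-based) index of the block containing the (0-based) vertex `v`:
`blk r m v = b` iff `sig m (b-1) ≤ v < sig m b`. -/
def blk (r : ℕ) (m : ℕ → ℕ) (v : ℕ) : ℕ :=
  1 + ((Finset.Icc 1 r).filter (fun l => sig m l ≤ v)).card

/-- `Γ(m₁,…,m_r) = ((((O_{m₁} ∨ K_{m₂}) ∪ O_{m₃}) ∨ K_{m₄}) ⋯ )`: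
the odd-indexed blocks are added as sets of isolated vertices (disjoint union with `O_{m_l}`)
and the even-indexed blocks are cliques joined to everything already present.  Hence two
distinct vertices are adjacent iff the larger of their two block indices is even.  Vertices
are labelled `0,…,n-1` (`n = m₁+⋯+m_r`), block `B₁` first, then `B₂`, etc. -/
def GammaEven (r : ℕ) (m : ℕ → ℕ) : SimpleGraph (Fin (sig m r)) where
  Adj u v := u ≠ v ∧ (max (blk r m (u : ℕ)) (blk r m (v : ℕ))) % 2 = 0
  symm := by
    constructor
    intro u v h
    exact ⟨h.1.symm, by rw [max_comm]; exact h.2⟩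
  loopless := by constructor; intro u h; exact h.1 rfl

/-- `Γ(m₁,…,m_r) = ((((K_{m₁} ∪ O_{m₂}) ∨ K_{m₃}) ∪ O_{m₄}) ⋯ )`:
here the odd-indexed blocks are the joined cliques (`B₁ = K_{m₁}`), so two distinct
vertices are adjacent iff the larger of their two block indices is odd. -/
def GammaOdd (r : ℕ) (m : ℕ → ℕ) : SimpleGraph (Fin (sig m r)) where
  Adj u v := u ≠ v ∧ (max (blk r m (u : ℕ)) (blk r m (v : ℕ))) % 2 = 1
  symm := by
    constructor
    intro u v h
    exact ⟨h.1.symm, by rw [max_comm]; exact h.2⟩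
  loopless := by constructor; intro u h; exact h.1 rfl

/-- Add a new vertex to `G`: dominating (adjacent to all existing vertices) if
`dom = true`, isolated otherwise. -/
def SimpleGraph.addVertex {V : Type} (G : SimpleGraph V) (dom : Bool) :
    SimpleGraph (Option V) where
  Adj u v :=
    match u, v with
    | some a, some b => G.Adj a b
    | some _, none => dom = true
    | none, some _ => dom = true
    | none, none => False
  symm := by
    constructor
    intro u v h
    match u, v with
    | some a, some b => exact G.adj_symm h
    | some a, none => exact h
    | none, some b => exact h
    | none, none => exact h
  loopless := by
    constructor
    intro u h
    match u with
    | some a => exact G.irrefl h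
    | none => exact h

/-- The graphs obtainable from the one-vertex graph by repeatedly adding either an
isolated vertex or a dominating vertex. -/
inductive IsThresholdOn : ∀ V : Type, SimpleGraph V → Prop
  | single : IsThresholdOn PUnit ⊥
  | step (V : Type) (G : SimpleGraph V) (dom : Bool) :
      IsThresholdOn V G → IsThresholdOn (Option V) (G.addVertex dom)

/-- `G` is a threshold graph: it is isomorphic to a graph produced by the threshold
construction. -/
def IsThreshold {V : Type} (G : SimpleGraph V) : Prop :=
  ∃ (W : Type) (H : SimpleGraph W), IsThresholdOn W H ∧ Nonempty (G ≃g H)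

/-! A threshold graph on `n` vertices is determined by its creation sequence `d`: numbering the
vertices in order of creation, `u` and `v` are adjacent iff the later one was added as a
dominating vertex, i.e. iff `d (max u v)`. The maximal constant runs of `d` are the blocks of
`Γ(m₁, …, m_r)`, isolated and dominating alternately. The type of the first vertex is immaterial,
so it can be merged into the run of the second one, which makes `m₁ ≥ 2`; connectivity forces the
last vertex to be dominating, so the last block is a clique, and the type of the first run decides
between the two shapes of `Γ`. -/

def SimpleGraph.Iso.addVertex {V W : Type} {G : SimpleGraph V} {H : SimpleGraph W} (e : G ≃g H)
    (dom : Bool) : G.addVertex dom ≃g H.addVertex dom where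
  toEquiv := Equiv.optionCongr e.toEquiv
  map_rel_iff' {u v} := by
    cases u <;> cases v <;> simp [SimpleGraph.addVertex, e.map_adj_iff]

lemma IsThreshold.of_iso {V W : Type} {G : SimpleGraph V} {H : SimpleGraph W}
    (e : G ≃g H) (h : IsThreshold H) : IsThreshold G :=
  let ⟨W', H', hH', ⟨e'⟩⟩ := h
  ⟨W', H', hH', ⟨e.trans e'⟩⟩

def creationGraph (n : ℕ) (d : ℕ → Bool) : SimpleGraph (Fin n) where
  Adj u v := u ≠ v ∧ d (max (u : ℕ) v) = true
  symm := ⟨fun _ _ h => ⟨h.1.symm, max_comm (α := ℕ) _ _ ▸ h.2⟩⟩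
  loopless := ⟨fun _ h => h.1 rfl⟩

namespace creationGraph

variable {n : ℕ} {d : ℕ → Bool}

lemma adj {u v : Fin n} :
    (creationGraph n d).Adj u v ↔ (u : ℕ) ≠ v ∧ d (max (u : ℕ) v) = true := by
  rw [← Fin.ne_iff_vne]; rfl

/-- The value `d 0` is irrelevant: vertex `0` is never the larger endpoint of an edge. -/
def congr {n' : ℕ} {d' : ℕ → Bool} (h : n = n') (hd : ∀ i, 0 < i → i < n → d i = d' i) :
    creationGraph n d ≃g creationGraph n' d' where
  toEquiv := finCongr h
  map_rel_iff' {u v} := by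
    simp only [finCongr_apply, adj, Fin.val_cast]
    refine and_congr_right fun huv => ?_
    rw [hd _ (by omega) (by omega)]

def succIso (n : ℕ) (d : ℕ → Bool) :
    creationGraph (n + 1) d ≃g (creationGraph n d).addVertex (d n) where
  toEquiv := finSuccEquivLast
  map_rel_iff' {u v} := by
    induction u using Fin.lastCases <;> induction v using Fin.lastCases <;>
      simp [SimpleGraph.addVertex, adj] <;> omega

def oneIso (d : ℕ → Bool) : creationGraph 1 d ≃g (⊥ : SimpleGraph PUnit) where
  toEquiv := Equiv.equivPUnit (Fin 1)
  map_rel_iff' {u v} := by simp [Subsingleton.elim u v]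

lemma dominating_last_of_connected (h : (creationGraph n d).Connected) (hn : 2 ≤ n) :
    d (n - 1) = true := by
  have : Nontrivial (Fin n) := Fin.nontrivial_iff_two_le.mpr hn
  obtain ⟨u, hu⟩ := h.preconnected.exists_adj_of_nontrivial ⟨n - 1, by omega⟩
  rw [adj] at hu
  simpa [show max (n - 1) (u : ℕ) = n - 1 by omega] using hu.2

end creationGraph

lemma isThreshold_creationGraph (d : ℕ → Bool) {n : ℕ} (hn : 0 < n) :
    IsThreshold (creationGraph n d) := by
  induction n, hn using Nat.le_induction with
  | base => exact ⟨PUnit, ⊥, .single, ⟨creationGraph.oneIso d⟩⟩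
  | succ n _ ih =>
    obtain ⟨W, H, hH, ⟨e⟩⟩ := ih
    exact ⟨Option W, H.addVertex (d n), .step W H (d n) hH,
      ⟨(creationGraph.succIso n d).trans (e.addVertex (d n))⟩⟩

lemma IsThresholdOn.exists_iso_creationGraph {W : Type} {H : SimpleGraph W}
    (h : IsThresholdOn W H) : ∃ n d, 0 < n ∧ Nonempty (H ≃g creationGraph n d) := by
  induction h with
  | single => exact ⟨1, fun _ => false, one_pos, ⟨(creationGraph.oneIso _).symm⟩⟩
  | step W G dom _ ih =>
    obtain ⟨n, d, -, ⟨e⟩⟩ := ih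
    let d' := Function.update d n dom
    have e' : creationGraph n d ≃g creationGraph n d' :=
      creationGraph.congr rfl fun i _ hi => (Function.update_of_ne hi.ne _ _).symm
    refine ⟨n + 1, d', n.succ_pos, ⟨?_⟩⟩
    have hd' : d' n = dom := Function.update_self n dom d
    exact (SimpleGraph.Iso.addVertex (e.trans e') dom).trans
      (hd' ▸ creationGraph.succIso n d').symm

lemma isThreshold_iff_exists_iso_creationGraph {V : Type} (G : SimpleGraph V) :
    IsThreshold G ↔ ∃ n d, 0 < n ∧ Nonempty (G ≃g creationGraph n d) := by
  constructor
  · rintro ⟨W, H, hH, ⟨e⟩⟩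
    obtain ⟨n, d, hn, ⟨e'⟩⟩ := hH.exists_iso_creationGraph
    exact ⟨n, d, hn, ⟨e.trans e'⟩⟩
  · rintro ⟨n, d, hn, ⟨e⟩⟩
    exact (isThreshold_creationGraph d hn).of_iso e

section Gamma

variable (r : ℕ) (m : ℕ → ℕ)

lemma blk_mono : Monotone (blk r m) := fun _ _ hab =>
  Nat.add_le_add_left (card_le_card (monotone_filter_right _ fun _ _ h => h.trans hab)) 1

lemma gammaEven_eq_creationGraph :
    GammaEven r m = creationGraph (sig m r) (fun v => decide (blk r m v % 2 = 0)) := by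
  ext u v
  simp [GammaEven, creationGraph.adj, ← (blk_mono r m).map_max, Fin.val_ne_iff]

lemma gammaOdd_eq_creationGraph :
    GammaOdd r m = creationGraph (sig m r) (fun v => decide (blk r m v % 2 = 1)) := by
  ext u v
  simp [GammaOdd, creationGraph.adj, ← (blk_mono r m).map_max, Fin.val_ne_iff]

end Gamma

lemma sig_pos {m : ℕ → ℕ} {r : ℕ} (hr : 1 ≤ r) (hm : 0 < m 1) : 0 < sig m r :=
  hm.trans_le (single_le_sum (fun i _ => Nat.zero_le (m i)) (mem_Icc.mpr ⟨le_rfl, hr⟩))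

/-- `runIndex d v` is the index (from 1) of the maximal constant run of `d 0, d 1, …`
containing position `v`. -/
def runIndex (d : ℕ → Bool) : ℕ → ℕ
  | 0 => 1
  | v + 1 => runIndex d v + if d (v + 1) = d v then 0 else 1

def runLength (d : ℕ → Bool) (n l : ℕ) : ℕ := #{v ∈ range n | runIndex d v = l}

section Runs

variable (d : ℕ → Bool)

lemma one_le_runIndex (v : ℕ) : 1 ≤ runIndex d v := by
  induction v with
  | zero => rfl
  | succ v ih => exact ih.trans (Nat.le_add_right _ _)

lemma runIndex_mono : Monotone (runIndex d) :=
  monotone_nat_of_le_succ fun _ => Nat.le_add_right _ _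

lemma runIndex_succ_le (v : ℕ) : runIndex d (v + 1) ≤ runIndex d v + 1 := by
  simp only [runIndex]; split <;> omega

lemma runIndex_odd_iff (v : ℕ) : runIndex d v % 2 = 1 ↔ d v = d 0 := by
  induction v with
  | zero => simp [runIndex]
  | succ v ih =>
    simp only [runIndex]
    split_ifs with h
    · rwa [h]
    · rw [show (runIndex d v + 1) % 2 = 1 ↔ ¬runIndex d v % 2 = 1 by omega, ih]
      revert h
      cases d v <;> cases d (v + 1) <;> cases d 0 <;> simp

lemma exists_runIndex_eq {v l : ℕ} (hl : 1 ≤ l) (hlv : l ≤ runIndex d v) :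
    ∃ w ≤ v, runIndex d w = l := by
  induction v with
  | zero => exact ⟨0, le_rfl, by simp_all [runIndex]; omega⟩
  | succ v ih =>
    rcases (hlv.trans (runIndex_succ_le d v)).lt_or_eq with hlt | heq
    · obtain ⟨w, hw, hwl⟩ := ih (Nat.lt_succ_iff.mp hlt)
      exact ⟨w, hw.trans v.le_succ, hwl⟩
    · exact ⟨v + 1, le_rfl, le_antisymm (heq ▸ runIndex_succ_le d v) hlv⟩

lemma sig_runLength (n l : ℕ) : sig (runLength d n) l = #{v ∈ range n | runIndex d v ≤ l} := by
  rw [card_eq_sum_card_fiberwise (f := runIndex d) (t := Icc 1 l)]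
  · refine sum_congr rfl fun i hi => ?_
    rw [filter_filter]
    refine congrArg card (filter_congr fun v _ => ?_)
    rw [mem_Icc] at hi
    constructor <;> intro <;> omega
  · intro v hv
    simp only [coe_filter, Set.mem_ofPred_eq] at hv
    exact mem_Icc.mpr ⟨one_le_runIndex d v, hv.2⟩

lemma sig_runLength_le_iff {n v : ℕ} (hv : v < n) (l : ℕ) :
    sig (runLength d n) l ≤ v ↔ l < runIndex d v := by
  rw [sig_runLength]
  constructor
  · intro h
    by_contra! hl
    have : range (v + 1) ⊆ {w ∈ range n | runIndex d w ≤ l} := fun w hw => by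
      rw [mem_range] at hw
      exact mem_filter.mpr ⟨mem_range.mpr (by omega), (runIndex_mono d (by omega)).trans hl⟩
    simpa using (card_le_card this).trans h
  · intro hl
    have : {w ∈ range n | runIndex d w ≤ l} ⊆ range v := fun w hw => by
      rw [mem_filter] at hw
      exact mem_range.mpr (lt_of_not_ge fun hvw => by have := runIndex_mono d hvw; omega)
    simpa using card_le_card this

lemma sig_runLength_runIndex {n : ℕ} (hn : 0 < n) :
    sig (runLength d n) (runIndex d (n - 1)) = n := by
  rw [sig_runLength, filter_true_of_mem fun v hv => runIndex_mono d (by simp at hv; omega),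
    card_range]

lemma blk_runLength {n v : ℕ} (hv : v < n) :
    blk (runIndex d (n - 1)) (runLength d n) v = runIndex d v := by
  have : {l ∈ Icc 1 (runIndex d (n - 1)) | sig (runLength d n) l ≤ v} =
      Icc 1 (runIndex d v - 1) := by
    ext l
    simp only [mem_filter, mem_Icc, sig_runLength_le_iff d hv]
    have := runIndex_mono d (show v ≤ n - 1 by omega)
    omega
  rw [blk, this, Nat.card_Icc]
  have := one_le_runIndex d v
  omega

lemma runLength_pos {n l : ℕ} (hn : 0 < n) (hl : 1 ≤ l) (hln : l ≤ runIndex d (n - 1)) :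
    0 < runLength d n l := by
  obtain ⟨w, hw, hwl⟩ := exists_runIndex_eq d hl hln
  exact card_pos.mpr ⟨w, mem_filter.mpr ⟨mem_range.mpr (by omega), hwl⟩⟩

lemma two_le_runLength_one {n : ℕ} (hn : 2 ≤ n) (h01 : d 1 = d 0) : 2 ≤ runLength d n 1 := by
  have : {0, 1} ⊆ {v ∈ range n | runIndex d v = 1} := fun w hw => by
    simp only [mem_insert, mem_singleton] at hw
    rcases hw with rfl | rfl <;> simp [runIndex, h01] <;> omega
  exact card_le_card this

end Runs

section Parity

variable {d : ℕ → Bool}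

lemma eq_decide_runIndex_even (h0 : d 0 = false) (v : ℕ) :
    d v = decide (runIndex d v % 2 = 0) := by
  have := runIndex_odd_iff d v
  rw [h0] at this
  cases h : d v <;> simp_all

lemma eq_decide_runIndex_odd (h0 : d 0 = true) (v : ℕ) :
    d v = decide (runIndex d v % 2 = 1) := by
  have := runIndex_odd_iff d v
  rw [h0] at this
  cases h : d v <;> simp_all

lemma exists_iso_gammaEven {n : ℕ} (hn : 2 ≤ n) (h01 : d 1 = d 0) (hlast : d (n - 1) = true)
    (h0 : d 0 = false) :
    ∃ k m, 1 ≤ k ∧ (∀ i, 1 ≤ i → i ≤ 2 * k → 1 ≤ m i) ∧ 2 ≤ m 1 ∧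
      Nonempty (creationGraph n d ≃g GammaEven (2 * k) m) := by
  have hr : runIndex d (n - 1) % 2 = 0 := by
    simpa using (eq_decide_runIndex_even h0 (n - 1)).symm.trans hlast
  have := one_le_runIndex d (n - 1)
  refine ⟨runIndex d (n - 1) / 2, runLength d n, by omega,
    fun i hi hir => runLength_pos d (by omega) hi (by omega), two_le_runLength_one d hn h01, ?_⟩
  rw [show 2 * (runIndex d (n - 1) / 2) = runIndex d (n - 1) by omega,
    gammaEven_eq_creationGraph]
  exact ⟨creationGraph.congr (sig_runLength_runIndex d (by omega)).symm fun v _ hv => by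
    rw [blk_runLength d hv, ← eq_decide_runIndex_even h0]⟩

lemma exists_iso_gammaOdd {n : ℕ} (hn : 2 ≤ n) (h01 : d 1 = d 0) (hlast : d (n - 1) = true)
    (h0 : d 0 = true) :
    ∃ k m, (∀ i, 1 ≤ i → i ≤ 2 * k + 1 → 1 ≤ m i) ∧ 2 ≤ m 1 ∧
      Nonempty (creationGraph n d ≃g GammaOdd (2 * k + 1) m) := by
  have hr : runIndex d (n - 1) % 2 = 1 := by
    simpa using (eq_decide_runIndex_odd h0 (n - 1)).symm.trans hlast
  refine ⟨runIndex d (n - 1) / 2, runLength d n,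
    fun i hi hir => runLength_pos d (by omega) hi (by omega), two_le_runLength_one d hn h01, ?_⟩
  rw [show 2 * (runIndex d (n - 1) / 2) + 1 = runIndex d (n - 1) by omega,
    gammaOdd_eq_creationGraph]
  exact ⟨creationGraph.congr (sig_runLength_runIndex d (by omega)).symm fun v _ hv => by
    rw [blk_runLength d hv, ← eq_decide_runIndex_odd h0]⟩

end Parity

/-- A connected graph `G` on at least two vertices is a threshold graph
iff it is isomorphic to `Γ(m₁,…,m_{2k}) = ((((O_{m₁} ∨ K_{m₂}) ∪ O_{m₃}) ∨ K_{m₄})⋯) ∨ K_{m_{2k}}`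
for some `k ≥ 1` and positive `m₁,…,m_{2k}` with `m₁ ≥ 2`, or to
`Γ(m₁,…,m_{2k+1}) = ((((K_{m₁} ∪ O_{m₂}) ∨ K_{m₃}) ∪ O_{m₄})⋯) ∨ K_{m_{2k+1}}`
for some `k ≥ 0` and positive `m₁,…,m_{2k+1}` with `m₁ ≥ 2`. -/
theorem isThreshold_iff_gamma {V : Type} [Fintype V] (G : SimpleGraph V)
    (hconn : G.Connected) (hcard : 2 ≤ Fintype.card V) :
    IsThreshold G ↔
      ((∃ (k : ℕ) (m : ℕ → ℕ), 1 ≤ k ∧ (∀ i, 1 ≤ i → i ≤ 2 * k → 1 ≤ m i) ∧ 2 ≤ m 1 ∧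
          Nonempty (G ≃g GammaEven (2 * k) m)) ∨
        (∃ (k : ℕ) (m : ℕ → ℕ), (∀ i, 1 ≤ i → i ≤ 2 * k + 1 → 1 ≤ m i) ∧ 2 ≤ m 1 ∧
          Nonempty (G ≃g GammaOdd (2 * k + 1) m))) := by
  rw [isThreshold_iff_exists_iso_creationGraph]
  constructor
  · rintro ⟨n, d₀, -, ⟨e₀⟩⟩
    have hn : 2 ≤ n := by simpa using hcard.trans_eq (Fintype.card_congr e₀.toEquiv)
    let d := Function.update d₀ 0 (d₀ 1)
    have e : G ≃g creationGraph n d := e₀.trans <|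
      creationGraph.congr rfl fun i hi _ => (Function.update_of_ne hi.ne' _ _).symm
    have h01 : d 1 = d 0 := by simp [d]
    have hlast := creationGraph.dominating_last_of_connected (e.connected_iff.mp hconn) hn
    cases h0 : d 0
    · obtain ⟨k, m, hk, hm, hm1, ⟨e'⟩⟩ := exists_iso_gammaEven hn h01 hlast h0
      exact Or.inl ⟨k, m, hk, hm, hm1, ⟨e.trans e'⟩⟩
    · obtain ⟨k, m, hm, hm1, ⟨e'⟩⟩ := exists_iso_gammaOdd hn h01 hlast h0
      exact Or.inr ⟨k, m, hm, hm1, ⟨e.trans e'⟩⟩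
  · rintro (⟨k, m, hk, -, hm1, ⟨e⟩⟩ | ⟨k, m, -, hm1, ⟨e⟩⟩)
    · rw [gammaEven_eq_creationGraph] at e
      exact ⟨_, _, sig_pos (by omega) (by omega), ⟨e⟩⟩
    · rw [gammaOdd_eq_creationGraph] at e
      exact ⟨_, _, sig_pos (by omega) (by omega), ⟨e⟩⟩
end

section
/- Let n = 4m with m ≥ 1, let i and j be two distinct vertices of the complete graph K_n, and let K_n⁻ = K_n − {i,j} be the graph obtained by deleting the edge {i,j}. Then p_{K_n⁻}(i,j,π/2) = 1, and moreover p_{K_n⁻}(k,l,π/2) = 0 for every pair of distinct vertices k, l with k,l ∉ {i,j}. -/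
open Finset

/-- `U_t = exp(−itL)`, where `L` is the Laplacian matrix of `G` (diagonal entries the
degrees, entry `−1` for each edge, `0` otherwise). -/
noncomputable def Ut {n : ℕ} (G : SimpleGraph (Fin n)) [DecidableRel G.Adj] (t : ℝ) :
    Matrix (Fin n) (Fin n) ℂ :=
  NormedSpace.exp ((-(Complex.I * (t : ℂ))) • G.lapMatrix ℂ)

/-- The transfer probability `p_G(i,j,t) = |(U_t)_{j,i}|²`. -/
noncomputable def transferProb {n : ℕ} (G : SimpleGraph (Fin n)) [DecidableRel G.Adj]
    (i j : Fin n) (t : ℝ) : ℝ :=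
  ‖Ut G t j i‖ ^ 2

/-- `K_n − {i,j}`: the complete graph on `Fin n` with the single edge `{i,j}` removed. -/
def KnMinusEdge (n : ℕ) (i j : Fin n) : SimpleGraph (Fin n) where
  Adj u v := u ≠ v ∧ s(u, v) ≠ s(i, j)
  symm := ⟨by
    intro u v h
    exact ⟨h.1.symm, by rw [Sym2.eq_swap]; exact h.2⟩⟩
  loopless := ⟨by intro u h; exact h.1 rfl⟩

instance (n : ℕ) (i j : Fin n) : DecidableRel (KnMinusEdge n i j).Adj := fun u v =>
  decidable_of_iff (u ≠ v ∧ s(u, v) ≠ s(i, j)) Iff.rfl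

/-! With `v = e_i - e_j` and `J` the all-ones matrix, the Laplacian of `K_n − {i,j}` is
`n • 1 - J - v vᵀ`, and the three terms commute because `J v = 0`. As `J² = n J` and
`(v vᵀ)² = 2 v vᵀ`, the exponential of each term is affine in that term; at `t = π/2` with `4 ∣ n`
the first two factors are the identity and the last is the reflection `1 - v vᵀ`, which maps
`e_i` to `e_j` and fixes every `e_k` with `k ∉ {i, j}`. -/

open Matrix Complex

section TopologicalAlgebra

variable {𝔸 : Type*} [Ring 𝔸] [Algebra ℂ 𝔸] [TopologicalSpace 𝔸] [IsTopologicalRing 𝔸]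
  [ContinuousSMul ℂ 𝔸] [T2Space 𝔸]

theorem IsIdempotentElem.exp_smul {P : 𝔸} (hP : IsIdempotentElem P) (w : ℂ) :
    NormedSpace.exp (w • P) = 1 + (exp w - 1) • P := by
  have hterm : ∀ k : ℕ, (k.factorial : ℂ)⁻¹ • (w • P) ^ k =
      (w ^ k / k.factorial) • P + if k = 0 then 1 - P else 0 := by
    rintro (_ | k)
    · simp
    · rw [smul_pow, hP.pow_succ_eq, smul_smul, if_neg k.succ_ne_zero, add_zero, div_eq_inv_mul]
  have hsum : HasSum (fun k : ℕ => (k.factorial : ℂ)⁻¹ • (w • P) ^ k) (exp w • P + (1 - P)) := by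
    simp_rw [hterm, exp_eq_exp_ℂ]
    exact ((NormedSpace.expSeries_div_hasSum_exp w).smul_const P).add (hasSum_ite_eq 0 (1 - P))
  rw [congrFun (NormedSpace.exp_eq_tsum ℂ) (w • P), hsum.tsum_eq, sub_smul, one_smul]
  abel

theorem NormedSpace.exp_smul_of_mul_self_eq_smul {A : 𝔸} {s : ℂ} (hA : A * A = s • A)
    (hs : s ≠ 0) (w : ℂ) :
    NormedSpace.exp (w • A) = 1 + ((Complex.exp (w * s) - 1) / s) • A := by
  have hP : IsIdempotentElem (s⁻¹ • A) := by
    rw [IsIdempotentElem, smul_mul_smul_comm, hA, smul_smul, mul_assoc, inv_mul_cancel₀ hs,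
      mul_one]
  have hw : w • A = (w * s) • (s⁻¹ • A) := by
    rw [smul_smul, mul_assoc, mul_inv_cancel₀ hs, mul_one]
  rw [hw, hP.exp_smul, smul_smul, div_eq_mul_inv]

end TopologicalAlgebra

theorem Matrix.ext_of_offDiag_of_mulVec_one {ι R : Type*} [Fintype ι] [DecidableEq ι]
    [NonAssocRing R] {A B : Matrix ι ι R} (hoff : ∀ u w, u ≠ w → A u w = B u w)
    (hrow : A *ᵥ 1 = B *ᵥ 1) : A = B := by
  ext u w
  obtain rfl | huw := eq_or_ne u w
  · have h := congrFun hrow u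
    simp only [mulVec, dotProduct, Pi.one_apply, mul_one] at h
    rw [← add_sum_erase _ _ (mem_univ u), ← add_sum_erase _ _ (mem_univ u),
      sum_congr rfl fun w hw => hoff u w (ne_of_mem_erase hw).symm] at h
    exact add_right_cancel h
  · exact hoff u w huw

theorem SimpleGraph.lapMatrix_eq_of_offDiag {V R : Type*} [Fintype V] [DecidableEq V]
    [NonAssocRing R] (G : SimpleGraph V) [DecidableRel G.Adj] {M : Matrix V V R}
    (hoff : ∀ u w, u ≠ w → M u w = if G.Adj u w then -1 else 0)
    (hrow : M *ᵥ 1 = 0) : G.lapMatrix R = M := by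
  refine Matrix.ext_of_offDiag_of_mulVec_one (fun u w huw => ?_) ?_
  · rw [hoff u w huw, lapMatrix, Matrix.sub_apply, degMatrix, diagonal_apply_ne _ huw,
      adjMatrix_apply]
    split_ifs <;> simp
  · exact G.lapMatrix_mulVec_const_eq_zero.trans hrow.symm

theorem Matrix.vecMulVec_self_mul_self {ι R : Type*} [Fintype ι] [CommRing R] (u : ι → R) :
    vecMulVec u u * vecMulVec u u = (u ⬝ᵥ u) • vecMulVec u u := by
  rw [vecMulVec_mul_vecMulVec, vecMulVec_smul]

theorem Matrix.commute_vecMulVec_self_of_dotProduct_eq_zero {ι R : Type*} [Fintype ι]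
    [CommRing R] {u v : ι → R} (h : u ⬝ᵥ v = 0) : Commute (vecMulVec u u) (vecMulVec v v) := by
  rw [Commute, SemiconjBy, vecMulVec_mul_vecMulVec, vecMulVec_mul_vecMulVec, h, dotProduct_comm,
    h, zero_smul, zero_smul, vecMulVec_zero, vecMulVec_zero]

def edgeVector {V R : Type*} [DecidableEq V] [Ring R] (i j : V) : V → R :=
  Pi.single i 1 - Pi.single j 1

section edgeVector

variable {V R : Type*} [DecidableEq V] [CommRing R] {i j : V}

theorem one_dotProduct_edgeVector [Fintype V] : (1 : V → R) ⬝ᵥ edgeVector i j = 0 := by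
  simp [edgeVector, dotProduct_sub]

theorem edgeVector_dotProduct_self [Fintype V] (hij : i ≠ j) :
    edgeVector i j ⬝ᵥ (edgeVector i j : V → R) = 2 := by
  simp [edgeVector, dotProduct_sub, hij, hij.symm]
  norm_num

theorem edgeVector_mul_edgeVector {u w : V} (huw : u ≠ w) :
    (edgeVector i j u : R) * edgeVector i j w = if s(u, w) = s(i, j) then -1 else 0 := by
  simp only [edgeVector, Pi.sub_apply, Pi.single_apply, Sym2.eq_iff]
  split_ifs <;> simp_all

end edgeVector

theorem lapMatrix_knMinusEdge {R : Type*} [CommRing R] {n : ℕ} (i j : Fin n) :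
    (KnMinusEdge n i j).lapMatrix R =
      (n : R) • 1 - vecMulVec 1 1 - vecMulVec (edgeVector i j) (edgeVector i j) := by
  refine SimpleGraph.lapMatrix_eq_of_offDiag _ (fun u w huw => ?_) ?_
  · rw [Matrix.sub_apply, Matrix.sub_apply, Matrix.smul_apply, one_apply_ne huw, vecMulVec_apply,
      vecMulVec_apply, edgeVector_mul_edgeVector huw]
    by_cases he : s(u, w) = s(i, j)
    · have hnadj : ¬ (KnMinusEdge n i j).Adj u w := fun h => h.2 he
      rw [if_pos he, if_neg hnadj]
      simp
    · have hadj : (KnMinusEdge n i j).Adj u w := ⟨huw, he⟩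
      rw [if_neg he, if_pos hadj]
      simp
  · rw [sub_mulVec, sub_mulVec, smul_mulVec, one_mulVec, vecMulVec_mulVec, vecMulVec_mulVec,
      one_dotProduct_one, dotProduct_comm, one_dotProduct_edgeVector]
    simp only [op_smul_eq_smul, Fintype.card_fin, zero_smul, sub_zero]
    exact sub_self _

theorem exp_smul_lapMatrix_knMinusEdge {n : ℕ} {i j : Fin n} (hij : i ≠ j) (w : ℂ) :
    NormedSpace.exp (w • (KnMinusEdge n i j).lapMatrix ℂ) =
      exp (w * n) • (1 + ((exp (-w * n) - 1) / n) • vecMulVec 1 1) *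
        (1 + ((exp (-w * 2) - 1) / 2) • vecMulVec (edgeVector i j) (edgeVector i j)) := by
  set J : Matrix (Fin n) (Fin n) ℂ := vecMulVec 1 1
  set Q : Matrix (Fin n) (Fin n) ℂ := vecMulVec (edgeVector i j) (edgeVector i j)
  have hJJ : J * J = (n : ℂ) • J := by
    rw [vecMulVec_self_mul_self, one_dotProduct_one, Fintype.card_fin]
  have hQQ : Q * Q = (2 : ℂ) • Q := by
    rw [vecMulVec_self_mul_self, edgeVector_dotProduct_self hij]
  have hJQ : Commute J Q := commute_vecMulVec_self_of_dotProduct_eq_zero one_dotProduct_edgeVector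
  have hsplit : w • (KnMinusEdge n i j).lapMatrix ℂ = (w * n) • 1 + (-w) • J + (-w) • Q := by
    rw [lapMatrix_knMinusEdge]
    module
  have hcomm₁ : Commute ((w * n) • (1 : Matrix (Fin n) (Fin n) ℂ)) ((-w) • J) :=
    ((Commute.one_left J).smul_left _).smul_right _
  have hcomm₂ : Commute ((w * n) • 1 + (-w) • J) ((-w) • Q) :=
    (((Commute.one_left Q).smul_left _).add_left (hJQ.smul_left _)).smul_right _
  have hn0 : (n : ℂ) ≠ 0 := Nat.cast_ne_zero.2 (Fin.pos i).ne'
  rw [hsplit, Matrix.exp_add_of_commute _ _ hcomm₂, Matrix.exp_add_of_commute _ _ hcomm₁,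
    IsIdempotentElem.one.exp_smul, NormedSpace.exp_smul_of_mul_self_eq_smul hJJ hn0,
    NormedSpace.exp_smul_of_mul_self_eq_smul hQQ two_ne_zero, sub_smul, one_smul,
    add_sub_cancel, smul_mul_assoc, one_mul]

theorem Ut_knMinusEdge_pi_div_two {m n : ℕ} (hn : n = 4 * m) {i j : Fin n} (hij : i ≠ j) :
    Ut (KnMinusEdge n i j) (Real.pi / 2) = 1 - vecMulVec (edgeVector i j) (edgeVector i j) := by
  set w : ℂ := -(I * (Real.pi / 2 : ℝ)) with hw
  have hwn : exp (-w * n) = 1 := by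
    have h : -w * n = m * (2 * Real.pi * I) := by
      rw [hw, hn]; push_cast; ring
    rw [h, exp_nat_mul_two_pi_mul_I]
  have hwn' : exp (w * n) = 1 := by rw [← neg_neg w, neg_mul, Complex.exp_neg, hwn, inv_one]
  have hw2 : exp (-w * 2) = -1 := by
    have h : -w * 2 = Real.pi * I := by rw [hw]; push_cast; ring
    rw [h, exp_pi_mul_I]
  rw [Ut, ← hw, exp_smul_lapMatrix_knMinusEdge hij, hwn, hwn', hw2]
  norm_num [sub_eq_add_neg]

theorem transferProb_knMinusEdge_general (m n : ℕ) (hn : n = 4 * m)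
    (i j : Fin n) (hij : i ≠ j) :
    transferProb (KnMinusEdge n i j) i j (Real.pi / 2) = 1 ∧
      ∀ k l : Fin n, k ≠ l → k ≠ i → k ≠ j → l ≠ i → l ≠ j →
        transferProb (KnMinusEdge n i j) k l (Real.pi / 2) = 0 := by
  have hU := Ut_knMinusEdge_pi_div_two hn hij
  simp only [transferProb, hU, Matrix.sub_apply, one_apply, vecMulVec_apply, edgeVector,
    Pi.sub_apply, Pi.single_apply]
  refine ⟨by simp [hij, hij.symm], fun k l hkl hki hkj hli hlj => ?_⟩
  simp [hki, hkj, hli, hlj, hkl.symm]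

/-- Let `n = 4m`, `m ≥ 1`, and let `K_n⁻ = K_n − {i,j}` for distinct
vertices `i, j`.  Then `p_{K_n⁻}(i,j,π/2) = 1`, and `p_{K_n⁻}(k,l,π/2) = 0` for all
distinct `k, l ∉ {i,j}`. -/
theorem transferProb_knMinusEdge (m n : ℕ) (hm : 1 ≤ m) (hn : n = 4 * m)
    (i j : Fin n) (hij : i ≠ j) :
    transferProb (KnMinusEdge n i j) i j (Real.pi / 2) = 1 ∧
      ∀ k l : Fin n, k ≠ l → k ≠ i → k ≠ j → l ≠ i → l ≠ j →
        transferProb (KnMinusEdge n i j) k l (Real.pi / 2) = 0 :=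
  transferProb_knMinusEdge_general m n hn i j hij
end

section
/- Let n = 4m with m ≥ 1, let M be a matching in the complete graph K_n (a set of pairwise vertex-disjoint edges) of size k ≤ 2m, and let G = K_n − M be the graph obtained by deleting all edges of M. Then for every edge {i,j} ∈ M one has p_G(i,j,π/2) = 1. -/
open Finset

/-- `K_n − M`: the complete graph on `Fin n` with the edges of `M` removed. -/
def KnMinusSet (n : ℕ) (M : Finset (Sym2 (Fin n))) : SimpleGraph (Fin n) where
  Adj u v := u ≠ v ∧ s(u, v) ∉ M
  symm := by
    refine ⟨?_⟩
    intro u v h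
    exact ⟨h.1.symm, by rw [Sym2.eq_swap]; exact h.2⟩
  loopless := by refine ⟨?_⟩; intro u h; exact h.1 rfl

instance (n : ℕ) (M : Finset (Sym2 (Fin n))) : DecidableRel (KnMinusSet n M).Adj :=
  fun u v => decidable_of_iff (u ≠ v ∧ s(u, v) ∉ M) Iff.rfl

/-! Let `H` be the graph of the matching, so that `K_n − M = Hᶜ` and
`L(Hᶜ) = n • 1 - J - L(H)` with `J` the all-ones matrix; the three summands commute.
An element with `p * p = a • p` satisfies `exp (c • p) = 1 + a⁻¹ (e^{ca} - 1) • p`, and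
`1² = 1`, `J² = n • J`, `L(H)² = 2 • L(H)` (all degrees of `H` are at most one). At
`t = π/2` with `4 ∣ n` the first two exponentials are `1` and the last is `1 - L(H)`, whose
`(j, i)` entry is `1` for every edge `{i, j}` of `H`. -/

open Matrix NormedSpace

namespace NormedSpace

variable {𝔸 : Type*} [Ring 𝔸] [Algebra ℂ 𝔸] [TopologicalSpace 𝔸] [IsTopologicalRing 𝔸]
  [ContinuousSMul ℂ 𝔸] [T2Space 𝔸] {p : 𝔸}

theorem exp_smul_of_isIdempotentElem (hp : IsIdempotentElem p) (c : ℂ) :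
    exp (c • p) = 1 + (Complex.exp c - 1) • p := by
  have hscalar : HasSum (fun n => ((n.factorial⁻¹ : ℂ) • c ^ n) • p) (Complex.exp c • p) := by
    rw [Complex.exp_eq_exp_ℂ]
    exact (exp_series_hasSum_exp' (𝕂 := ℂ) c).smul_const p
  -- the series of `exp (c • p)` differs from `∑ (cⁿ/n!) • p` only in its constant term
  have hseries := hscalar.add (hasSum_ite_eq 0 (1 - p))
  have hvalue : Complex.exp c • p + (1 - p) = 1 + (Complex.exp c - 1) • p := by module
  rw [exp_eq_tsum ℂ, ← hvalue, ← hseries.tsum_eq]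
  refine tsum_congr fun n => ?_
  cases n with
  | zero => simp
  | succ n => simp [smul_pow, hp.pow_succ_eq, smul_smul]

theorem exp_smul_of_mul_self_eq_smul_s4 {a : ℂ} (ha : a ≠ 0) (hp : p * p = a • p) (c : ℂ) :
    exp (c • p) = 1 + (a⁻¹ * (Complex.exp (c * a) - 1)) • p := by
  have hq : IsIdempotentElem (a⁻¹ • p) := by
    rw [IsIdempotentElem, smul_mul_smul_comm, hp, smul_smul, mul_assoc, inv_mul_cancel₀ ha,
      mul_one]
  calc exp (c • p) = exp ((c * a) • a⁻¹ • p) := by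
        rw [smul_smul, mul_assoc, mul_inv_cancel₀ ha, mul_one]
    _ = _ := by rw [exp_smul_of_isIdempotentElem hq, smul_smul, mul_comm]

theorem exp_smul_eq_one_of_mul_self_eq_smul {a : ℂ} (ha : a ≠ 0) (hp : p * p = a • p) {c : ℂ}
    (hc : Complex.exp (c * a) = 1) : exp (c • p) = 1 := by
  rw [exp_smul_of_mul_self_eq_smul_s4 ha hp, hc, sub_self, mul_zero, zero_smul, add_zero]

end NormedSpace

theorem Matrix.of_one_mul_of_one {V R : Type*} [Fintype V] [NonAssocSemiring R] :
    (of 1 : Matrix V V R) * of 1 = (Fintype.card V : R) • of 1 := by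
  ext u v
  simp [mul_apply]

namespace SimpleGraph

variable {V R : Type*} [Fintype V] [DecidableEq V] (G : SimpleGraph V) [DecidableRel G.Adj]

theorem lapMatrix_apply_of_adj [Ring R] {u v : V} (h : G.Adj u v) : G.lapMatrix R u v = -1 := by
  simp [lapMatrix, degMatrix, h.ne, h]

theorem lapMatrix_compl [Ring R] [DecidableRel Gᶜ.Adj] :
    Gᶜ.lapMatrix R = (Fintype.card V : R) • 1 - of 1 - G.lapMatrix R := by
  ext u v
  by_cases huv : u = v
  · subst huv
    have hdeg := G.degree_lt_card_verts u
    simp only [lapMatrix, degMatrix, degree_compl, Matrix.sub_apply, diagonal_apply_eq,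
      adjMatrix_apply, SimpleGraph.irrefl, ↓reduceIte, sub_zero, Matrix.smul_apply, one_apply_eq,
      smul_eq_mul, mul_one, of_apply, Pi.one_apply]
    rw [Nat.sub_sub, Nat.cast_sub (by omega)]
    push_cast
    abel
  · by_cases hadj : G.Adj u v <;> simp [lapMatrix, degMatrix, huv, hadj]

theorem lapMatrix_mul_of_one [Ring R] : G.lapMatrix R * of 1 = 0 := by
  ext u v
  simpa [mul_apply, mulVec, dotProduct] using
    congrFun (G.lapMatrix_mulVec_const_eq_zero (R := R)) u

theorem of_one_mul_lapMatrix [CommRing R] : of 1 * G.lapMatrix R = 0 := by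
  have hones : (of 1 : Matrix V V R)ᵀ = of 1 := rfl
  rw [← transpose_transpose (of 1 * _), transpose_mul, (G.isSymm_lapMatrix (R := R)).eq, hones,
    lapMatrix_mul_of_one, transpose_zero]

theorem lapMatrix_mulVec_apply_of_adj [NonAssocRing R] {u w : V} (huw : G.Adj u w)
    (hu : G.degree u ≤ 1) (x : V → R) : (G.lapMatrix R *ᵥ x) u = x u - x w := by
  have hw : w ∈ G.neighborFinset u := (G.mem_neighborFinset u w).2 huw
  have hnbrs : G.neighborFinset u = {w} :=
    Finset.eq_singleton_iff_unique_mem.2 ⟨hw, fun y hy => Finset.card_le_one.1 hu _ hy _ hw⟩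
  simp [lapMatrix_mulVec_apply, ← card_neighborFinset_eq_degree, hnbrs]

theorem lapMatrix_mulVec_apply_of_degree_eq_zero [NonAssocRing R] {u : V} (hu : G.degree u = 0)
    (x : V → R) : (G.lapMatrix R *ᵥ x) u = 0 := by
  simp [lapMatrix_mulVec_apply, hu, Finset.card_eq_zero.1 hu]

theorem lapMatrix_mul_self_of_degree_le_one [CommRing R] (h : ∀ v, G.degree v ≤ 1) :
    G.lapMatrix R * G.lapMatrix R = (2 : R) • G.lapMatrix R := by
  refine ext_of_mulVec_single fun k => funext fun u => ?_
  rw [← mulVec_mulVec, smul_mulVec, Pi.smul_apply]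
  rcases Nat.le_one_iff_eq_zero_or_eq_one.1 (h u) with hu | hu
  · rw [lapMatrix_mulVec_apply_of_degree_eq_zero G hu,
      lapMatrix_mulVec_apply_of_degree_eq_zero G hu, smul_zero]
  · obtain ⟨w, hw⟩ := (G.degree_pos_iff_exists_adj u).1 (by omega)
    rw [lapMatrix_mulVec_apply_of_adj G hw (h u), lapMatrix_mulVec_apply_of_adj G hw (h u),
      lapMatrix_mulVec_apply_of_adj G hw.symm (h w), smul_eq_mul]
    ring

open Complex in
theorem exp_neg_I_pi_div_two_smul_lapMatrix_compl [Nonempty V] [DecidableRel Gᶜ.Adj]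
    (hG : ∀ v, G.degree v ≤ 1) (hV : 4 ∣ Fintype.card V) :
    exp ((-(I * ((Real.pi / 2 : ℝ) : ℂ))) • Gᶜ.lapMatrix ℂ) = 1 - G.lapMatrix ℂ := by
  obtain ⟨m, hm⟩ := hV
  set t : ℂ := I * ((Real.pi / 2 : ℝ) : ℂ)
  set n := Fintype.card V
  set J : Matrix V V ℂ := of 1
  set L := G.lapMatrix ℂ
  have hsplit : (-t) • Gᶜ.lapMatrix ℂ = (-t * n) • 1 + (t • J + t • L) := by
    rw [lapMatrix_compl]
    module
  have hJL : Commute (t • J) (t • L) := by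
    refine (Commute.smul_left ?_ t).smul_right t
    rw [Commute, SemiconjBy, lapMatrix_mul_of_one, of_one_mul_lapMatrix]
  have hscalar : exp ((-t * n) • (1 : Matrix V V ℂ)) = 1 := by
    refine exp_smul_eq_one_of_mul_self_eq_smul one_ne_zero (by rw [one_mul, one_smul]) ?_
    convert exp_int_mul_two_pi_mul_I (-m) using 2
    simp only [t, hm]
    push_cast
    ring
  have hones : exp (t • J) = 1 := by
    have hn : (n : ℂ) ≠ 0 := Nat.cast_ne_zero.2 Fintype.card_ne_zero
    refine exp_smul_eq_one_of_mul_self_eq_smul hn of_one_mul_of_one ?_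
    convert exp_nat_mul_two_pi_mul_I m using 2
    simp only [t, hm]
    push_cast
    ring
  have hmatching : exp (t • L) = 1 - L := by
    have h2t : t * 2 = Real.pi * I := by
      simp only [t]
      push_cast
      ring
    rw [exp_smul_of_mul_self_eq_smul_s4 two_ne_zero (lapMatrix_mul_self_of_degree_le_one G hG), h2t,
      exp_pi_mul_I]
    module
  rw [hsplit, Matrix.exp_add_of_commute _ _ ((Commute.one_left _).smul_left _),
    Matrix.exp_add_of_commute _ _ hJL, hscalar, hones, hmatching, one_mul, one_mul]

end SimpleGraph

theorem SimpleGraph.degree_fromEdgeSet_le_one {V : Type*} [Fintype V] {s : Set (Sym2 V)}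
    [DecidableRel (fromEdgeSet s).Adj] (hs : ∀ e ∈ s, ∀ f ∈ s, e ≠ f → ∀ v, v ∈ e → v ∉ f)
    (v : V) : (fromEdgeSet s).degree v ≤ 1 := by
  rw [← card_neighborFinset_eq_degree, Finset.card_le_one]
  intro a ha b hb
  simp only [mem_neighborFinset, fromEdgeSet_adj] at ha hb
  by_contra hab
  exact hs _ ha.1 _ hb.1 (fun h => hab (Sym2.congr_right.1 h)) v (Sym2.mem_mk_left v a)
    (Sym2.mem_mk_left v b)

theorem knMinusSet_eq_compl_fromEdgeSet (n : ℕ) (M : Finset (Sym2 (Fin n))) :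
    KnMinusSet n M = (SimpleGraph.fromEdgeSet (M : Set (Sym2 (Fin n))))ᶜ := by
  ext u v
  simp only [KnMinusSet, SimpleGraph.compl_adj, SimpleGraph.fromEdgeSet_adj, Finset.mem_coe]
  tauto

open SimpleGraph in
theorem transferProb_knMinusMatching_general (m n : ℕ) (hn : n = 4 * m)
    (M : Finset (Sym2 (Fin n)))
    (hloop : ∀ e ∈ M, ¬ e.IsDiag)
    (hdisj : ∀ e ∈ M, ∀ f ∈ M, e ≠ f → ∀ v : Fin n, v ∈ e → v ∉ f) :
    ∀ i j : Fin n, s(i, j) ∈ M →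
      transferProb (KnMinusSet n M) i j (Real.pi / 2) = 1 := by
  intro i j hij
  have : Nonempty (Fin n) := ⟨i⟩
  set H := fromEdgeSet (M : Set (Sym2 (Fin n)))
  have hUt : Ut (KnMinusSet n M) (Real.pi / 2) = 1 - H.lapMatrix ℂ := by
    rw [Ut, ← exp_neg_I_pi_div_two_smul_lapMatrix_compl H (degree_fromEdgeSet_le_one hdisj)
      (by simp [hn])]
    congr!
    exact knMinusSet_eq_compl_fromEdgeSet n M
  have hji : j ≠ i := fun h => hloop _ hij (Sym2.mk_isDiag_iff.2 h.symm)
  have hadj : H.Adj j i := (fromEdgeSet_adj _).2 ⟨by rwa [Sym2.eq_swap], hji⟩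
  rw [transferProb, hUt, Matrix.sub_apply, one_apply_ne hji, lapMatrix_apply_of_adj H hadj]
  norm_num

/-- Let `n = 4m` with `m ≥ 1`, let `M` be a matching of `K_n` (a set of
pairwise vertex-disjoint non-loop edges) of size at most `2m`, and `G = K_n − M`.  Then
for every edge `{i,j} ∈ M`, `p_G(i,j,π/2) = 1`. -/
theorem transferProb_knMinusMatching (m n : ℕ) (hm : 1 ≤ m) (hn : n = 4 * m)
    (M : Finset (Sym2 (Fin n)))
    (hloop : ∀ e ∈ M, ¬ e.IsDiag)
    (hdisj : ∀ e ∈ M, ∀ f ∈ M, e ≠ f → ∀ v : Fin n, v ∈ e → v ∉ f)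
    (hcard : M.card ≤ 2 * m) :
    ∀ i j : Fin n, s(i, j) ∈ M →
      transferProb (KnMinusSet n M) i j (Real.pi / 2) = 1 :=
  transferProb_knMinusMatching_general m n hn M hloop hdisj
end

section
/- Let a ≥ 3 be an odd natural number. Then the maximum over t ∈ [0, 2π] of min{−cos(2t), −cos(at), cos((a−2)t)} equals cos(π/a); that is, min{−cos(2t), −cos(at), cos((a−2)t)} ≤ cos(π/a) for all t ∈ [0,2π], and there exists t ∈ [0,2π] at which all three of −cos(2t), −cos(at), cos((a−2)t) are at least cos(π/a) with the minimum equal to cos(π/a). -/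
/-! If `-cos (2t) > cos (π/a)`, then `t` lies within `π/(2a)` of an odd multiple of `π/2`; since
`a - 2` is odd, `(a-2)t` then lies within `(a-2)π/(2a) = π/2 - π/a` of an odd multiple of `π/2`,
so `|cos ((a-2)t)| < sin (π/2 - π/a) = cos (π/a)`. The bound is attained at `t = jπ/a`, where `j`
is the odd one of `(a ± 1)/2`: there `cos (at) = -1`, while `2t ≡ π ± π/a` and
`(a-2)t ≡ ∓π/a` modulo `2π`. -/

open Real

namespace Real

lemma abs_sin_lt_sin_of_abs_lt {x y : ℝ} (hy : y ≤ π / 2) (h : |x| < y) : |sin x| < sin y := by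
  have hx : |x| ≤ π := by linarith [pi_pos]
  rw [abs_sin_eq_sin_abs_of_abs_le_pi hx]
  exact sin_lt_sin_of_lt_of_le_pi_div_two (by linarith [abs_nonneg x, pi_pos]) hy h

lemma abs_lt_of_cos_lt_cos {x y : ℝ} (hx : |x| ≤ π) (hy₀ : 0 ≤ y) (h : cos y < cos x) :
    |x| < y := by
  by_contra! hle
  rw [← cos_abs x] at h
  exact h.not_ge (cos_le_cos_of_nonneg_of_le_pi hy₀ hx hle)

lemma exists_abs_sub_int_mul_two_pi_le (u : ℝ) : ∃ n : ℤ, |u - n * (2 * π)| ≤ π := by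
  refine ⟨round (u / (2 * π)), ?_⟩
  have h2π : 0 < 2 * π := by linarith [pi_pos]
  calc |u - round (u / (2 * π)) * (2 * π)| = 2 * π * |u / (2 * π) - round (u / (2 * π))| := by
        rw [← abs_of_pos h2π, ← abs_mul, abs_of_pos h2π]; congr 1; field_simp
    _ ≤ 2 * π * (1 / 2) := by gcongr; exact abs_sub_round _
    _ = π := by ring

lemma exists_eq_pi_div_two_add_int_mul_pi_add {t δ : ℝ} (hδ : 0 ≤ δ)
    (h : cos (2 * t) < -cos (2 * δ)) : ∃ n : ℤ, ∃ s, |s| < δ ∧ t = π / 2 + n * π + s := by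
  obtain ⟨n, hn⟩ := exists_abs_sub_int_mul_two_pi_le (2 * t - π)
  have hcos : cos (2 * δ) < cos (2 * t - π - n * (2 * π)) := by
    rw [cos_sub_int_mul_two_pi, cos_sub_pi]; linarith
  have hv := abs_lt_of_cos_lt_cos hn (by linarith) hcos
  refine ⟨n, (2 * t - π - n * (2 * π)) / 2, ?_, by ring⟩
  rw [abs_div, abs_two]; linarith

lemma abs_cos_odd_mul_lt_sin {m : ℕ} (hm : Odd m) {δ t : ℝ} (hδ : 0 ≤ δ)
    (hmδ : m * δ ≤ π / 2) (h : cos (2 * t) < -cos (2 * δ)) :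
    |cos (m * t)| < sin (m * δ) := by
  obtain ⟨k, rfl⟩ := hm
  obtain ⟨n, s, hs, rfl⟩ := exists_eq_pi_div_two_add_int_mul_pi_add hδ h
  have hshift : ((2 * k + 1 : ℕ) : ℝ) * (π / 2 + n * π + s)
      = ((2 * k + 1 : ℕ) * s + π / 2) + ((k + (2 * k + 1) * n : ℤ) : ℝ) * π := by
    push_cast; ring
  have hm0 : (0 : ℝ) < ((2 * k + 1 : ℕ) : ℝ) := by positivity
  rw [hshift, cos_add_int_mul_pi, cos_add_pi_div_two, abs_mul, abs_neg_one_zpow, one_mul,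
    abs_neg]
  refine abs_sin_lt_sin_of_abs_lt hmδ ?_
  rw [abs_mul, abs_of_pos hm0]
  exact mul_lt_mul_of_pos_left hs hm0

lemma cos_mul_of_abs_eq_one {e : ℝ} (he : |e| = 1) (x : ℝ) : cos (e * x) = cos x := by
  rw [← cos_abs, abs_mul, he, one_mul, cos_abs]

end Real

lemma min_neg_cos_two_mul_cos_odd_mul_le {m : ℕ} (hm : Odd m) (t : ℝ) :
    min (-cos (2 * t)) (cos (m * t)) ≤ cos (π / (m + 2)) := by
  by_cases h : -cos (2 * t) ≤ cos (π / (m + 2))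
  · exact min_le_of_left_le h
  have hπm : 0 < π / (m + 2) := by positivity
  have h2δ : 2 * (π / (2 * (m + 2))) = π / (m + 2) := by field_simp
  have hmδ : m * (π / (2 * (m + 2))) = π / 2 - π / (m + 2) := by field_simp; ring
  have hbound := abs_cos_odd_mul_lt_sin hm (δ := π / (2 * (m + 2))) (t := t) (by positivity)
    (by rw [hmδ]; linarith) (by rw [h2δ]; linarith)
  rw [hmδ, sin_pi_div_two_sub] at hbound
  exact min_le_of_right_le ((le_abs_self _).trans hbound.le)

section OddMultipleOfPiDiv

variable {a j : ℕ}

lemma neg_cos_two_mul_mul_pi_div (ha : a ≠ 0) (hja : |2 * (j : ℝ) - a| = 1) :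
    -cos (2 * (j * π / a)) = cos (π / a) := by
  rw [show 2 * (j * π / a) = (2 * j - a) * (π / a) + π by field_simp; ring, cos_add_pi, neg_neg,
    cos_mul_of_abs_eq_one hja]

lemma cos_mul_odd_mul_pi_div (ha : a ≠ 0) (hj : Odd j) : cos (a * (j * π / a)) = -1 := by
  rw [mul_div_cancel₀ _ (Nat.cast_ne_zero.mpr ha), cos_nat_mul_pi, hj.neg_one_pow]

lemma cos_sub_two_mul_odd_mul_pi_div (ha : a ≠ 0) (hj : Odd j) (hja : |2 * (j : ℝ) - a| = 1) :
    cos (((a : ℝ) - 2) * (j * π / a)) = cos (π / a) := by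
  obtain ⟨k, rfl⟩ := hj
  rw [show ((a : ℝ) - 2) * ((2 * k + 1 : ℕ) * π / a)
      = -((2 * (2 * k + 1 : ℕ) - a) * (π / a)) + k * (2 * π) by push_cast; field_simp; ring,
    cos_add_nat_mul_two_pi, cos_neg, cos_mul_of_abs_eq_one hja]

end OddMultipleOfPiDiv

lemma Odd.exists_odd_abs_two_mul_sub_eq_one {a : ℕ} (hodd : Odd a) :
    ∃ j : ℕ, Odd j ∧ |2 * (j : ℝ) - a| = 1 := by
  obtain ⟨k, rfl⟩ := hodd
  rcases Nat.even_or_odd k with hk | hk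
  · refine ⟨k + 1, hk.add_one, ?_⟩
    rw [show 2 * ((k + 1 : ℕ) : ℝ) - (2 * k + 1 : ℕ) = 1 by push_cast; ring, abs_one]
  · refine ⟨k, hk, ?_⟩
    rw [show 2 * (k : ℝ) - (2 * k + 1 : ℕ) = -1 by push_cast; ring, abs_neg, abs_one]

/-- For odd `a ≥ 3`, the maximum over `t ∈ [0, 2π]` of
`min{−cos(2t), −cos(at), cos((a−2)t)}` equals `cos(π/a)`. -/
theorem max_min_cos_eq_cos_pi_div_odd (a : ℕ) (ha : 3 ≤ a) (hodd : Odd a) :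
    IsGreatest
      ((fun t : ℝ =>
          min (-Real.cos (2 * t))
            (min (-Real.cos ((a : ℝ) * t)) (Real.cos (((a : ℝ) - 2) * t)))) ''
        Set.Icc 0 (2 * Real.pi))
      (Real.cos (Real.pi / a)) := by
  constructor
  · obtain ⟨j, hj, hja⟩ := hodd.exists_odd_abs_two_mul_sub_eq_one
    have ha0 : a ≠ 0 := by omega
    have ha3 : (3 : ℝ) ≤ a := by exact_mod_cast ha
    have hj_le : (j : ℝ) ≤ 2 * a := by linarith [(abs_le.mp hja.le).2]
    refine ⟨j * π / a, ⟨by positivity, ?_⟩, ?_⟩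
    · rw [div_le_iff₀ (by positivity)]; nlinarith [pi_pos]
    · simp only [neg_cos_two_mul_mul_pi_div ha0 hja, cos_mul_odd_mul_pi_div ha0 hj,
        cos_sub_two_mul_odd_mul_pi_div ha0 hj hja, neg_neg, min_eq_right (cos_le_one _), min_self]
  · obtain ⟨m, rfl⟩ : ∃ m, a = m + 2 := ⟨a - 2, by omega⟩
    have hm : Odd m := by simpa [Nat.odd_add] using hodd
    rintro _ ⟨t, -, rfl⟩
    have hbound := min_neg_cos_two_mul_cos_odd_mul_le hm t
    push_cast
    rw [add_sub_cancel_right]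
    exact (min_le_min_left _ (min_le_right _ _)).trans hbound
end

section
/- Let a ≥ 3 be an odd natural number. Then the maximum over t ∈ [0, 2π] of min{−cos(2t), cos(at), −cos((a−2)t)} equals cos(π/a); that is, min{−cos(2t), cos(at), −cos((a−2)t)} ≤ cos(π/a) for all t ∈ [0,2π], and this bound is attained for some t ∈ [0,2π]. -/
/-!
Write `t = π/2 + kπ + s` with `|s| ≤ π/2`. If `|s| ≥ π/(2a)` then `-cos (2t) = cos (2s) ≤ cos (π/a)`;
otherwise, `a - 2` being odd, `|cos ((a-2)t)| ≤ |sin ((a-2)s)| ≤ sin (π/2 - π/a) = cos (π/a)`.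
The bound is attained at `t = 2πj/a` with `4j = a ∓ 1`: there `cos (a t) = 1`, hence
`cos ((a-2)t) = cos (2t) = cos (π ∓ π/a) = -cos (π/a)`.
-/

open Real Set

lemma abs_cos_add_le_abs_sin_of_cos_eq_zero {x : ℝ} (hx : cos x = 0) (u : ℝ) :
    |cos (x + u)| ≤ |sin u| := by
  rw [cos_add, hx, zero_mul, zero_sub, abs_neg, abs_mul]
  exact mul_le_of_le_one_left (abs_nonneg _) (abs_sin_le_one x)

lemma cos_sub_of_cos_eq_one {x : ℝ} (hx : cos x = 1) (y : ℝ) : cos (x - y) = cos y := by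
  rw [cos_sub, hx, sin_eq_zero_iff_cos_eq.mpr (Or.inl hx), one_mul, zero_mul, add_zero]

lemma exists_eq_pi_div_two_add_int_mul_pi_add (t : ℝ) :
    ∃ k : ℤ, ∃ s : ℝ, |s| ≤ π / 2 ∧ t = π / 2 + k * π + s := by
  set x := (t - π / 2) / π
  refine ⟨round x, π * (x - round x), ?_, ?_⟩
  · rw [abs_mul, abs_of_pos pi_pos]
    linarith [mul_le_mul_of_nonneg_left (abs_sub_round x) pi_pos.le]
  · simp only [x]
    field_simp
    ring

lemma min_neg_cos_two_mul_neg_cos_le_cos_pi_div (a : ℕ) (ha : 3 ≤ a) (hodd : Odd a) (t : ℝ) :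
    min (-cos (2 * t)) (-cos ((a - 2 : ℝ) * t)) ≤ cos (π / a) := by
  have haR : (3 : ℝ) ≤ a := by exact_mod_cast ha
  obtain ⟨k, s, hs, rfl⟩ := exists_eq_pi_div_two_add_int_mul_pi_add t
  by_cases hsa : π / (2 * a) ≤ |s|
  · refine min_le_of_left_le ?_
    have h2t : 2 * (π / 2 + k * π + s) = 2 * s + π + k * (2 * π) := by ring
    rw [h2t, cos_add_int_mul_two_pi, cos_add_pi, neg_neg, ← cos_abs (2 * s), abs_mul,
      abs_two]
    refine cos_le_cos_of_nonneg_of_le_pi (by positivity) (by linarith) ?_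
    calc π / a = 2 * (π / (2 * a)) := by field_simp
      _ ≤ 2 * |s| := by gcongr
  · refine min_le_of_right_le ?_
    obtain ⟨m, hm⟩ : Odd ((a : ℤ) - 2) := hodd.natCast.sub_even even_two
    have hmR : (a : ℝ) - 2 = 2 * m + 1 := by exact_mod_cast hm
    have hcos : cos ((a - 2 : ℝ) * (π / 2 + k * π)) = 0 :=
      cos_eq_zero_iff.mpr ⟨2 * m * k + m + k, by rw [hmR]; push_cast; ring⟩
    have hu : |(a - 2 : ℝ) * s| ≤ π / 2 - π / a := by
      rw [abs_mul, abs_of_nonneg (by linarith)]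
      calc (a - 2 : ℝ) * |s| ≤ (a - 2) * (π / (2 * a)) := by gcongr; linarith; linarith
        _ = π / 2 - π / a := by field_simp
    have hπa : 0 ≤ π / a := by positivity
    calc -cos ((a - 2 : ℝ) * (π / 2 + k * π + s))
        ≤ |cos ((a - 2 : ℝ) * (π / 2 + k * π) + (a - 2) * s)| := by
          rw [mul_add]; exact neg_le_abs _
      _ ≤ |sin ((a - 2 : ℝ) * s)| := abs_cos_add_le_abs_sin_of_cos_eq_zero hcos _
      _ = sin |(a - 2 : ℝ) * s| := abs_sin_eq_sin_abs_of_abs_le_pi (by linarith [pi_pos])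
      _ ≤ sin (π / 2 - π / a) :=
          sin_le_sin_of_le_of_le_pi_div_two (by linarith [abs_nonneg ((a - 2 : ℝ) * s)])
            (by linarith) hu
      _ = cos (π / a) := sin_pi_div_two_sub _

lemma exists_cos_mul_eq_one_and_cos_two_mul_eq_neg_cos (a : ℕ) (hodd : Odd a) :
    ∃ t ∈ Icc 0 (2 * π), cos (a * t) = 1 ∧ cos (2 * t) = -cos (π / a) := by
  have ha : (0 : ℝ) < a := by exact_mod_cast hodd.pos
  suffices ∃ j : ℕ, j ≤ a ∧ cos (2 * (2 * π * j / a)) = -cos (π / a) by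
    obtain ⟨j, hja, hj⟩ := this
    have hjaR : (j : ℝ) ≤ a := by exact_mod_cast hja
    refine ⟨2 * π * j / a, ⟨by positivity, ?_⟩, ?_, hj⟩
    · rw [div_le_iff₀ ha]; gcongr
    · rw [mul_div_cancel₀ _ ha.ne', ← cos_nat_mul_two_pi j]; ring_nf
  obtain ⟨n, rfl⟩ := hodd
  rcases n.even_or_odd with ⟨m, rfl⟩ | ⟨m, rfl⟩
  · refine ⟨m, by omega, ?_⟩
    rw [← cos_pi_sub]; congr 1; push_cast; field_simp; ring
  · refine ⟨m + 1, by omega, ?_⟩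
    rw [← cos_add_pi]; congr 1; push_cast; field_simp; ring

/-- For odd `a ≥ 3`, the maximum over `t ∈ [0, 2π]` of
`min{−cos(2t), cos(at), −cos((a−2)t)}` equals `cos(π/a)`. -/
theorem max_min_cos_eq_cos_pi_div_odd' (a : ℕ) (ha : 3 ≤ a) (hodd : Odd a) :
    IsGreatest
      ((fun t : ℝ =>
          min (-Real.cos (2 * t))
            (min (Real.cos ((a : ℝ) * t)) (-Real.cos (((a : ℝ) - 2) * t)))) ''
        Set.Icc 0 (2 * Real.pi))
      (Real.cos (Real.pi / a)) := by
  constructor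
  · obtain ⟨t, ht, hat, h2t⟩ := exists_cos_mul_eq_one_and_cos_two_mul_eq_neg_cos a hodd
    refine ⟨t, ht, ?_⟩
    have hsub : ((a : ℝ) - 2) * t = a * t - 2 * t := by ring
    simp only [hsub, cos_sub_of_cos_eq_one hat, h2t, hat, neg_neg, min_self,
      min_eq_right (cos_le_one _)]
  · rintro _ ⟨t, -, rfl⟩
    exact (min_le_min le_rfl (min_le_right _ _)).trans
      (min_neg_cos_two_mul_neg_cos_le_cos_pi_div a ha hodd t)
end

section
/- Let a ≥ 3 be an odd natural number and let α, β, γ be positive real numbers with α ≥ β and α ≥ γ. Then for every t ∈ ℝ, |−α·e^{−i(a−2)t} + β·e^{−iat} + γ| ≤ ((α+β+γ)² − (1 − cos(π/a))·βγ)^{1/2}. -/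
open Real Complex

/-! Expanding the square, `(α + β + γ)² - |z|²` equals
`2αβ (1 + cos 2t) + 2αγ (1 + cos (a - 2)t) + 2βγ (1 - cos at)`, which by `α ≥ β, γ`
is at least `2βγ (3 + cos 2t + cos (a - 2)t - cos at)`, that is,
`4βγ (1 + cos² t + sin ((a - 1)t) sin t)`.
As `a - 1` is even, `|sin ((a - 1)t)| = |sin ((a - 1)(t - π/2))| ≤ (a - 1) |cos t|`, so the
last factor stays at least `3 / (2 (a - 1)²)` even where `cos t` is small; this beats
`(π / a)² / 8 ≥ (1 - cos (π / a)) / 4`. -/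

lemma abs_sin_nat_mul_le (n : ℕ) (x : ℝ) : |Real.sin (n * x)| ≤ n * |Real.sin x| := by
  induction n with
  | zero => simp
  | succ n ih =>
    rw [Nat.cast_succ, add_mul, one_mul, Real.sin_add]
    calc |Real.sin (n * x) * Real.cos x + Real.cos (n * x) * Real.sin x|
        ≤ |Real.sin (n * x)| * |Real.cos x| + |Real.cos (n * x)| * |Real.sin x| := by
          rw [← abs_mul, ← abs_mul]; exact abs_add_le _ _
      _ ≤ n * |Real.sin x| * 1 + 1 * |Real.sin x| := by
          gcongr
          · exact abs_cos_le_one x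
          · exact abs_cos_le_one _
      _ = (n + 1) * |Real.sin x| := by ring

lemma abs_sin_mul_le_of_even {n : ℕ} (hn : Even n) (t : ℝ) :
    |Real.sin (n * t)| ≤ n * |Real.cos t| := by
  obtain ⟨m, rfl⟩ := hn
  have h : ((m + m : ℕ) : ℝ) * t = (m + m : ℕ) * (t - π / 2) + m * π := by push_cast; ring
  rw [h, sin_add_nat_mul_pi, abs_mul, abs_pow, abs_neg, abs_one, one_pow, one_mul,
    ← abs_neg (Real.cos t), ← Real.sin_sub_pi_div_two]
  exact abs_sin_nat_mul_le _ _

lemma three_div_sq_le_one_add_cos_sq_add {n : ℕ} (hn : Even n) (hn2 : 2 ≤ n) (t : ℝ) :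
    3 / (2 * n ^ 2) ≤ 1 + Real.cos t ^ 2 + Real.sin (n * t) * Real.sin t := by
  set c := |Real.cos t|
  set s := |Real.sin t|
  have hN : (2 : ℝ) ≤ n := by exact_mod_cast hn2
  have hc : 0 ≤ c := abs_nonneg _
  have hs : 0 ≤ s := abs_nonneg _
  have hcos : Real.cos t ^ 2 = c ^ 2 := (sq_abs _).symm
  have hcs : c ^ 2 + s ^ 2 = 1 := by simp only [c, s, sq_abs]; exact cos_sq_add_sin_sq t
  -- `(1 - s) (1 + s) = c ^ 2` and `1 + s ≤ 2`
  have hs_le : s ≤ 1 - c ^ 2 / 2 := by nlinarith [abs_sin_le_one t]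
  have hprod : -(|Real.sin (n * t)| * s) ≤ Real.sin (n * t) * Real.sin t := by
    rw [← abs_mul]; exact neg_abs_le _
  rw [div_le_iff₀ (by positivity)]
  rcases le_total 1 (n * c) with h | h
  · have hσs : |Real.sin (n * t)| * s ≤ 1 - c ^ 2 / 2 := by
      nlinarith [abs_sin_le_one (n * t)]
    nlinarith
  · have hσs : |Real.sin (n * t)| * s ≤ n * c * (1 - c ^ 2 / 2) := by
      have := abs_sin_mul_le_of_even hn t
      have : 0 ≤ |Real.sin (n * t)| := abs_nonneg _
      nlinarith
    -- with `x = n c`, the claim reads `0 ≤ (1 - x) (2 n ^ 2 - x ^ 2 - 3 x - 3)`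
    have h1 : 0 ≤ 1 - n * c := sub_nonneg.2 h
    nlinarith [mul_nonneg h1 (by nlinarith : (0:ℝ) ≤ 2 * n ^ 2 - 8),
      mul_nonneg (mul_nonneg h1 h1) (by positivity : (0:ℝ) ≤ n * c + 4)]

lemma one_sub_cos_pi_div_le {a : ℕ} (ha : 3 ≤ a) (hodd : Odd a) (t : ℝ) :
    1 - Real.cos (π / a) ≤
      2 * (3 + Real.cos (2 * t) + Real.cos ((a - 2) * t) - Real.cos (a * t)) := by
  have hA : (3 : ℝ) ≤ a := by exact_mod_cast ha
  have hn_cast : ((a - 1 : ℕ) : ℝ) = a - 1 := by rw [Nat.cast_sub (by omega), Nat.cast_one]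
  have hn :=
    three_div_sq_le_one_add_cos_sq_add (Nat.Odd.sub_odd hodd odd_one) (by omega : 2 ≤ a - 1) t
  rw [hn_cast] at hn
  have hcos_sub : Real.cos ((a - 2) * t) - Real.cos (a * t)
      = 2 * Real.sin ((a - 1) * t) * Real.sin t := by
    rw [Real.cos_sub_cos]; ring_nf; rw [Real.sin_neg]; ring
  have hcos_two : Real.cos (2 * t) = 2 * Real.cos t ^ 2 - 1 := Real.cos_two_mul t
  have hquad : 1 - Real.cos (π / a) ≤ (π / a) ^ 2 / 2 := by
    linarith [Real.one_sub_sq_div_two_le_cos (x := π / a)]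
  have hpi : (π / a) ^ 2 / 2 ≤ 4 * (3 / (2 * (a - 1) ^ 2)) := by
    rw [div_pow, div_div, mul_div_assoc', div_le_div_iff₀ (by positivity) (by nlinarith)]
    have hpi_sq : π ^ 2 < 12 := by nlinarith [Real.pi_lt_d2, Real.pi_pos]
    have ha_sq : (a - 1 : ℝ) ^ 2 ≤ a ^ 2 := by nlinarith
    nlinarith [mul_le_mul_of_nonneg_left ha_sq (sq_nonneg π)]
  linarith

lemma norm_sq_neg_mul_exp_add_mul_exp_add (α β γ p q : ℝ) :
    ‖-(α : ℂ) * Complex.exp (-Complex.I * p) + β * Complex.exp (-Complex.I * q) + γ‖ ^ 2 =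
      α ^ 2 + β ^ 2 + γ ^ 2 - 2 * α * β * Real.cos (q - p) - 2 * α * γ * Real.cos p
        + 2 * β * γ * Real.cos q := by
  have hexp (x : ℝ) : Complex.exp (-Complex.I * x) = Real.cos x - Real.sin x * Complex.I := by
    rw [neg_mul, mul_comm, ← neg_mul, ← ofReal_neg, Complex.exp_mul_I, ← ofReal_cos,
      ← ofReal_sin, Real.cos_neg, Real.sin_neg, ofReal_neg]
    ring
  rw [hexp, hexp, Complex.sq_norm, Complex.normSq_apply]
  simp only [add_re, add_im, mul_re, mul_im, sub_re, sub_im, neg_re, neg_im, ofReal_re,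
    ofReal_im, I_re, I_im]
  rw [Real.cos_sub]
  linear_combination α ^ 2 * Real.sin_sq_add_cos_sq p + β ^ 2 * Real.sin_sq_add_cos_sq q

lemma norm_sq_neg_mul_exp_add_mul_exp_add_le {α β γ : ℝ} (hβ : 0 ≤ β) (hγ : 0 ≤ γ)
    (hβα : β ≤ α) (hγα : γ ≤ α) (p q : ℝ) :
    ‖-(α : ℂ) * Complex.exp (-Complex.I * p) + β * Complex.exp (-Complex.I * q) + γ‖ ^ 2
      ≤ (α + β + γ) ^ 2 - 2 * β * γ * (3 + Real.cos (q - p) + Real.cos p - Real.cos q) := by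
  rw [norm_sq_neg_mul_exp_add_mul_exp_add]
  have h₁ : 0 ≤ β * (α - γ) * (1 + Real.cos (q - p)) :=
    mul_nonneg (mul_nonneg hβ (sub_nonneg.2 hγα)) (by linarith [Real.neg_one_le_cos (q - p)])
  have h₂ : 0 ≤ γ * (α - β) * (1 + Real.cos p) :=
    mul_nonneg (mul_nonneg hγ (sub_nonneg.2 hβα)) (by linarith [Real.neg_one_le_cos p])
  linarith

theorem abs_triple_exp_le_general (a : ℕ) (ha : 3 ≤ a) (hodd : Odd a) (α β γ : ℝ)
    (hβ : 0 < β) (hγ : 0 < γ) (hβα : β ≤ α) (hγα : γ ≤ α) (t : ℝ) :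
    ‖-(α : ℂ) * Complex.exp (-Complex.I * (((a : ℂ) - 2) * (t : ℂ))) +
        (β : ℂ) * Complex.exp (-Complex.I * ((a : ℂ) * (t : ℂ))) + (γ : ℂ)‖ ≤
      Real.sqrt ((α + β + γ) ^ 2 - (1 - Real.cos (Real.pi / a)) * (β * γ)) := by
  have hp : ((a : ℂ) - 2) * (t : ℂ) = (((a - 2) * t : ℝ) : ℂ) := by push_cast; ring
  have hq : (a : ℂ) * (t : ℂ) = ((a * t : ℝ) : ℂ) := by push_cast; ring
  have hqp : (a : ℝ) * t - (a - 2) * t = 2 * t := by ring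
  rw [hp, hq]
  apply Real.le_sqrt_of_sq_le
  calc _ ≤ (α + β + γ) ^ 2 - 2 * β * γ *
          (3 + Real.cos (2 * t) + Real.cos ((a - 2) * t) - Real.cos (a * t)) := by
        rw [← hqp]; exact norm_sq_neg_mul_exp_add_mul_exp_add_le hβ.le hγ.le hβα hγα _ _
    _ ≤ (α + β + γ) ^ 2 - (1 - Real.cos (π / a)) * (β * γ) := by
        nlinarith [one_sub_cos_pi_div_le ha hodd t, mul_pos hβ hγ]

/-- For odd `a ≥ 3` and positive reals `α ≥ β, γ`, for every `t ∈ ℝ`,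
`|−α e^{−i(a−2)t} + β e^{−iat} + γ| ≤ ((α+β+γ)² − (1 − cos(π/a)) βγ)^{1/2}`. -/
theorem abs_triple_exp_le (a : ℕ) (ha : 3 ≤ a) (hodd : Odd a) (α β γ : ℝ)
    (hα : 0 < α) (hβ : 0 < β) (hγ : 0 < γ) (hβα : β ≤ α) (hγα : γ ≤ α) (t : ℝ) :
    ‖-(α : ℂ) * Complex.exp (-Complex.I * (((a : ℂ) - 2) * (t : ℂ))) +
        (β : ℂ) * Complex.exp (-Complex.I * ((a : ℂ) * (t : ℂ))) + (γ : ℂ)‖ ≤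
      Real.sqrt ((α + β + γ) ^ 2 - (1 - Real.cos (Real.pi / a)) * (β * γ)) :=
  abs_triple_exp_le_general a ha hodd α β γ hβ hγ hβα hγα t
end

section
/- Let k ≥ 1, let m₁,…,m_{2k} be positive integers with m₁ ≥ 2, let G = Γ(m₁,…,m_{2k}) with Laplacian L, and let j be an even index with 2 ≤ j ≤ 2k. If u ∈ ℝⁿ is any vector whose coordinates vanish outside block B_j and whose coordinates sum to zero, then L·u = λ₁(j)·u, where λ₁(j) = σ_j + m_{j+2} + m_{j+4} + ⋯ + m_{2k} and σ_j = m₁+⋯+m_j. -/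
open Finset Matrix

instance (r : ℕ) (m : ℕ → ℕ) : DecidableRel (GammaEven r m).Adj := fun u v =>
  decidable_of_iff (u ≠ v ∧ (max (blk r m (u : ℕ)) (blk r m (v : ℕ))) % 2 = 0) Iff.rfl

/-- `λ₀(j) = m_{j+1} + m_{j+3} + ⋯ + m_{2k}` (the indices run over `j+1, j+3, …`). -/
def lam0 (k : ℕ) (m : ℕ → ℕ) (j : ℕ) : ℕ :=
  ∑ l ∈ (Finset.Icc (j + 1) (2 * k)).filter (fun l => (l - j) % 2 = 1), m l

/-- `λ₁(j) = σ_j + m_{j+2} + m_{j+4} + ⋯ + m_{2k}` (the sum runs over `j+2, j+4, …`). -/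
def lam1 (k : ℕ) (m : ℕ → ℕ) (j : ℕ) : ℕ :=
  sig m j + ∑ l ∈ (Finset.Icc (j + 2) (2 * k)).filter (fun l => (l - j) % 2 = 0), m l

/-! Write `B` for the block `B_j`. It is a clique, and every vertex outside it is adjacent either
to all of `B` or to none of it. Hence, for `u` supported on `B` with `∑ u = 0`, the neighbours of
a vertex `v ∉ B` contribute `0` or `∑ u = 0` to `(L u) v`, while for `v ∈ B` the neighbours
inside `B` contribute `-u v`, so `(L u) v = (deg v + 1) u v`. The common value `deg v + 1` is
counted block by block: `v` sees every vertex of the blocks `B₁, …, B_j` and of the even blocks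
after `B_j`, which gives `λ₁(j)`. -/

namespace SimpleGraph

variable {V R : Type*} [Fintype V] [DecidableEq V] [NonAssocRing R]

theorem lapMatrix_mulVec_eq_smul_of_isClique (G : SimpleGraph V) [DecidableRel G.Adj]
    (S : Finset V) (d : ℕ) (hS : G.IsClique (S : Set V))
    (hext : ∀ v ∉ S, ∀ w ∈ S, ∀ w' ∈ S, G.Adj v w → G.Adj v w')
    (hdeg : ∀ v ∈ S, G.degree v + 1 = d) (u : V → R) (hsupp : ∀ v ∉ S, u v = 0)
    (hsum : ∑ v, u v = 0) :
    G.lapMatrix R *ᵥ u = (d : R) • u := by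
  have hsumS : ∑ w ∈ S, u w = 0 := by
    rwa [sum_subset (subset_univ S) fun w _ hw => hsupp w hw]
  funext v
  rw [lapMatrix_mulVec_apply, Pi.smul_apply, smul_eq_mul,
    ← sum_filter_of_ne (p := (· ∈ S)) fun w _ huw => by_contra fun hw => huw (hsupp w hw)]
  by_cases hv : v ∈ S
  · have hnbr : {w ∈ G.neighborFinset v | w ∈ S} = S.erase v := by
      ext w
      simp only [mem_filter, mem_neighborFinset, mem_erase]
      exact ⟨fun ⟨hvw, hw⟩ => ⟨hvw.ne.symm, hw⟩, fun ⟨hwv, hw⟩ => ⟨hS hv hw hwv.symm, hw⟩⟩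
    rw [hnbr, sum_erase_eq_sub hv, hsumS, ← hdeg v hv]
    push_cast
    noncomm_ring
  · have hnbr : ∑ w ∈ G.neighborFinset v with w ∈ S, u w = 0 := by
      by_cases hadj : ∃ w ∈ S, G.Adj v w
      · obtain ⟨w, hw, hvw⟩ := hadj
        rwa [filter_mem_eq_inter, inter_eq_right.mpr fun w' hw' =>
          (mem_neighborFinset G v w').mpr (hext v hv w hw w' hw' hvw)]
      · push Not at hadj
        rw [filter_false_of_mem fun w hw hwS => hadj w hwS ((mem_neighborFinset G v w).mp hw),
          sum_empty]
    rw [hnbr, hsupp v hv]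
    simp

end SimpleGraph

section Blocks

variable {m : ℕ → ℕ} {r : ℕ}

lemma sig_mono (m : ℕ → ℕ) : Monotone (sig m) := fun _ _ h =>
  sum_le_sum_of_subset (Icc_subset_Icc_right h)

lemma sig_succ (m : ℕ → ℕ) (l : ℕ) : sig m (l + 1) = sig m l + m (l + 1) :=
  sum_Icc_succ_top (by omega) _

lemma le_card_filter_sig_le_iff {w l : ℕ} (hl : l ≤ r) :
    l ≤ #{i ∈ Icc 1 r | sig m i ≤ w} ↔ sig m l ≤ w := by
  constructor
  · intro hcard
    by_contra! hw
    have hl0 : l ≠ 0 := by rintro rfl; simp [sig] at hw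
    have hsub : {i ∈ Icc 1 r | sig m i ≤ w} ⊆ Icc 1 (l - 1) := fun i hi => by
      simp only [mem_filter, mem_Icc] at hi ⊢
      refine ⟨hi.1.1, not_lt.mp fun hli => ?_⟩
      exact (hw.trans_le (sig_mono m (by omega : l ≤ i))).not_ge hi.2
    have := card_le_card hsub
    simp only [Nat.card_Icc] at this
    omega
  · intro hw
    have hsub : Icc 1 l ⊆ {i ∈ Icc 1 r | sig m i ≤ w} := fun i hi => by
      simp only [mem_filter, mem_Icc] at hi ⊢
      exact ⟨⟨hi.1, hi.2.trans hl⟩, (sig_mono m hi.2).trans hw⟩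
    simpa using card_le_card hsub

lemma blk_le_iff {w l : ℕ} (hl : l ≤ r) : blk r m w ≤ l ↔ w < sig m l := by
  have := le_card_filter_sig_le_iff (m := m) (w := w) hl
  rw [blk]
  omega

lemma blk_mem_Icc (w : Fin (sig m r)) : blk r m w ∈ Icc 1 r :=
  mem_Icc.mpr ⟨Nat.le_add_right 1 _, (blk_le_iff le_rfl).mpr w.isLt⟩

lemma card_filter_blk_eq {l : ℕ} (hl1 : 1 ≤ l) (hl : l ≤ r) :
    #{w : Fin (sig m r) | blk r m w = l} = m l := by
  have hsplit : ({w | blk r m w = l} : Finset (Fin (sig m r))) =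
      ({w | blk r m w ≤ l} : Finset (Fin (sig m r))) \
        ({w | blk r m w ≤ l - 1} : Finset (Fin (sig m r))) := by
    ext w
    simp only [mem_sdiff, mem_filter_univ]
    omega
  have hlt (l' : ℕ) (hl' : l' ≤ r) : #{w : Fin (sig m r) | blk r m w ≤ l'} = sig m l' := by
    simp_rw [blk_le_iff hl', Fin.card_filter_val_lt, min_eq_right (sig_mono m hl')]
  have hsub : ({w | blk r m w ≤ l - 1} : Finset (Fin (sig m r))) ⊆
      ({w | blk r m w ≤ l} : Finset (Fin (sig m r))) :=
    fun w => by simp only [mem_filter_univ]; omega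
  rw [hsplit, card_sdiff_of_subset hsub,
    hlt l hl, hlt (l - 1) (by omega), ← Nat.sub_add_cancel hl1, sig_succ]
  simp

lemma card_filter_blk_mem {A : Finset ℕ} (hA : A ⊆ Icc 1 r) :
    #{w : Fin (sig m r) | blk r m w ∈ A} = ∑ l ∈ A, m l := by
  refine (card_eq_sum_card_fiberwise (f := fun w : Fin (sig m r) => blk r m w) (t := A)
    fun w hw => (mem_filter.mp hw).2).trans ?_
  refine sum_congr rfl fun l hl => ?_
  rw [filter_filter, ← card_filter_blk_eq (m := m) (mem_Icc.mp (hA hl)).1 (mem_Icc.mp (hA hl)).2]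
  congr 1
  ext w
  simp only [mem_filter, mem_univ, true_and, and_iff_right_iff_imp]
  rintro rfl
  exact hl

end Blocks

section Gamma

variable {m : ℕ → ℕ} {r : ℕ}

@[simp] lemma gammaEven_adj {v w : Fin (sig m r)} :
    (GammaEven r m).Adj v w ↔ v ≠ w ∧ max (blk r m v) (blk r m w) % 2 = 0 := Iff.rfl

lemma isClique_gammaEven_blk {j : ℕ} (hj : Even j) :
    (GammaEven r m).IsClique ({w | blk r m w = j} : Finset (Fin (sig m r))) := by
  intro v hv w hw hvw
  simp only [mem_coe, mem_filter_univ] at hv hw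
  exact ⟨hvw, by rw [hv, hw, max_self]; exact Nat.even_iff.mp hj⟩

lemma gammaEven_adj_of_adj_of_blk_eq {j : ℕ} {v w w' : Fin (sig m r)} (hv : blk r m v ≠ j)
    (hw : blk r m w = j) (hw' : blk r m w' = j) (h : (GammaEven r m).Adj v w) :
    (GammaEven r m).Adj v w' :=
  ⟨fun hvw' => hv (hvw' ▸ hw'), hw' ▸ hw ▸ h.2⟩

lemma degree_gammaEven_add_one {k j : ℕ} (hj : Even j) (hjk : j ≤ 2 * k)
    {v : Fin (sig m (2 * k))} (hv : blk (2 * k) m v = j) :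
    (GammaEven (2 * k) m).degree v + 1 = lam1 k m j := by
  set E := {l ∈ Icc (j + 2) (2 * k) | (l - j) % 2 = 0}
  have hA : Icc 1 j ∪ E ⊆ Icc 1 (2 * k) := fun l hl => by
    simp only [E, mem_union, mem_filter, mem_Icc] at hl ⊢
    omega
  have hdisj : Disjoint (Icc 1 j) E := disjoint_left.mpr fun l hl hlE => by
    simp only [E, mem_filter, mem_Icc] at hl hlE
    omega
  have hj2 := Nat.even_iff.mp hj
  have hnbr : (GammaEven (2 * k) m).neighborFinset v =
      ({w | blk (2 * k) m w ∈ Icc 1 j ∪ E} : Finset (Fin (sig m (2 * k)))).erase v := by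
    ext w
    have hw := mem_Icc.mp (blk_mem_Icc w)
    simp only [SimpleGraph.mem_neighborFinset, gammaEven_adj, mem_erase, E, mem_union, mem_filter,
      mem_univ, true_and, mem_Icc, hv, max_def]
    split_ifs <;> omega
  have hvA : v ∈ ({w | blk (2 * k) m w ∈ Icc 1 j ∪ E} : Finset (Fin (sig m (2 * k)))) := by
    have hw := mem_Icc.mp (blk_mem_Icc v)
    simp only [mem_filter_univ, mem_union, mem_Icc, hv]
    omega
  rw [← SimpleGraph.card_neighborFinset_eq_degree, hnbr, card_erase_add_one hvA,
    card_filter_blk_mem hA, sum_union hdisj, lam1, sig]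

end Gamma

theorem lapMatrix_mulVec_eq_lam1_smul_general (k : ℕ) (m : ℕ → ℕ)
    (j : ℕ) (hj2 : j ≤ 2 * k) (hjeven : Even j)
    (u : Fin (sig m (2 * k)) → ℝ)
    (hsupp : ∀ v : Fin (sig m (2 * k)), blk (2 * k) m (v : ℕ) ≠ j → u v = 0)
    (hsum : ∑ v, u v = 0) :
    (GammaEven (2 * k) m).lapMatrix ℝ *ᵥ u = (lam1 k m j : ℝ) • u :=
  (GammaEven (2 * k) m).lapMatrix_mulVec_eq_smul_of_isClique {w | blk (2 * k) m w = j}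
    (lam1 k m j) (isClique_gammaEven_blk hjeven)
    (fun _ hv _ hw _ hw' => gammaEven_adj_of_adj_of_blk_eq (by simpa using hv)
      (by simpa using hw) (by simpa using hw'))
    (fun _ hv => degree_gammaEven_add_one hjeven hj2 (by simpa using hv)) u
    (fun v hv => hsupp v (by simpa using hv)) hsum

/-- For `G = Γ(m₁,…,m_{2k})` with Laplacian `L`, an even index
`2 ≤ j ≤ 2k`, and any vector `u` supported on block `B_j` with coordinate sum zero,
`L·u = λ₁(j)·u` where `λ₁(j) = σ_j + m_{j+2} + m_{j+4} + ⋯ + m_{2k}`. -/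
theorem lapMatrix_mulVec_eq_lam1_smul (k : ℕ) (hk : 1 ≤ k) (m : ℕ → ℕ)
    (hm : ∀ i, 1 ≤ i → i ≤ 2 * k → 1 ≤ m i) (hm1 : 2 ≤ m 1)
    (j : ℕ) (hj1 : 2 ≤ j) (hj2 : j ≤ 2 * k) (hjeven : Even j)
    (u : Fin (sig m (2 * k)) → ℝ)
    (hsupp : ∀ v : Fin (sig m (2 * k)), blk (2 * k) m (v : ℕ) ≠ j → u v = 0)
    (hsum : ∑ v, u v = 0) :
    (GammaEven (2 * k) m).lapMatrix ℝ *ᵥ u = (lam1 k m j : ℝ) • u :=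
  lapMatrix_mulVec_eq_lam1_smul_general k m j hj2 hjeven u hsupp hsum
end
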